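/- Let u_y : ℝ² → ℝ be smooth and suppose u_x¹ and u_x² are two smooth solutions on a rectangle Ω of the system −4∂²u_x/∂x² − ∂²u_x/∂y² = 3∂²u_y/∂y∂x and −3∂²u_x/∂x∂y = ∂²u_y/∂x² + 4∂²u_y/∂y². Then there exist constants c₁, c₂, c₃, c₄ with u_x¹(x,y) − u_x²(x,y) = c₁(x² − 4y²) + c₂x + c₃y + c₄ on Ω. -/

import Mathlib

noncomputable def pdx (f : ℝ → ℝ → ℝ) (x y : ℝ) : ℝ := deriv (fun t => f t y) x
noncomputable def pdy (f : ℝ → ℝ → ℝ) (x y : ℝ) : ℝ := deriv (fun t => f x t) y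


lemma constIoo {a b : ℝ} {f : ℝ → ℝ}
    (hf : ∀ x ∈ Set.Ioo a b, HasDerivAt f 0 x) :
    ∀ x ∈ Set.Ioo a b, ∀ y ∈ Set.Ioo a b, f x = f y := by
  intro x hx y hy
  have h : ∀ z ∈ Set.Ioo a b, HasFDerivAt f (0 : ℝ →L[ℝ] ℝ) z := by
    intro z hz
    have h0 : ContinuousLinearMap.toSpanSingleton ℝ (0 : ℝ) = 0 := by
      ext; simp
    have := (hf z hz).hasFDerivAt
    rwa [h0] at this
  exact (convex_Ioo a b).is_const_of_fderivWithin_eq_zero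
    (fun z hz => (h z hz).differentiableAt.differentiableWithinAt)
    (fun z hz => by
      rw [fderivWithin_of_isOpen isOpen_Ioo hz]
      exact (h z hz).fderiv) hx hy

lemma contDiff_partial_left {f : ℝ → ℝ → ℝ}
    (hf : ContDiff ℝ (⊤ : ℕ∞) (fun p : ℝ × ℝ => f p.1 p.2)) (y : ℝ) :
    ContDiff ℝ (⊤ : ℕ∞) (fun t : ℝ => f t y) :=
  hf.comp (contDiff_id.prodMk contDiff_const)

lemma contDiff_partial_right {f : ℝ → ℝ → ℝ}
    (hf : ContDiff ℝ (⊤ : ℕ∞) (fun p : ℝ × ℝ => f p.1 p.2)) (x : ℝ) :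
    ContDiff ℝ (⊤ : ℕ∞) (fun t : ℝ => f x t) :=
  hf.comp (contDiff_const.prodMk contDiff_id)

lemma hasDerivAt_pdx {f : ℝ → ℝ → ℝ}
    (hf : ContDiff ℝ (⊤ : ℕ∞) (fun p : ℝ × ℝ => f p.1 p.2)) (x y : ℝ) :
    HasDerivAt (fun t => f t y) (pdx f x y) x :=
  (((contDiff_partial_left hf y).differentiable (by simp)) x).hasDerivAt

lemma hasDerivAt_pdy {f : ℝ → ℝ → ℝ}
    (hf : ContDiff ℝ (⊤ : ℕ∞) (fun p : ℝ × ℝ => f p.1 p.2)) (x y : ℝ) :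
    HasDerivAt (fun t => f x t) (pdy f x y) y :=
  (((contDiff_partial_right hf x).differentiable (by simp)) y).hasDerivAt

lemma contDiff_pdx {f : ℝ → ℝ → ℝ}
    (hf : ContDiff ℝ (⊤ : ℕ∞) (fun p : ℝ × ℝ => f p.1 p.2)) :
    ContDiff ℝ (⊤ : ℕ∞) (fun p : ℝ × ℝ => pdx f p.1 p.2) := by
  have hF : ContDiff ℝ (⊤ : ℕ∞) (fun p : ℝ × ℝ =>
      fderiv ℝ (fun q : ℝ × ℝ => f q.1 q.2) p ((1 : ℝ), (0 : ℝ))) :=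
    (hf.fderiv_right (by simp)).clm_apply contDiff_const
  have heq : ∀ p : ℝ × ℝ, pdx f p.1 p.2 =
      fderiv ℝ (fun q : ℝ × ℝ => f q.1 q.2) p ((1 : ℝ), (0 : ℝ)) := by
    rintro ⟨x, y⟩
    have hline : HasDerivAt (fun t : ℝ => ((t, y) : ℝ × ℝ)) ((1 : ℝ), (0 : ℝ)) x :=
      HasDerivAt.prodMk (hasDerivAt_id x) (hasDerivAt_const x y)
    have hc : HasDerivAt (fun t : ℝ => f t y)
        (fderiv ℝ (fun q : ℝ × ℝ => f q.1 q.2) (x, y) ((1 : ℝ), (0 : ℝ))) x :=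
      by have h := ((hf.differentiable (by simp) (x, y)).hasFDerivAt.comp_hasDerivAt x hline); exact h
    show deriv (fun t => f t y) x = _
    exact hc.deriv
  have : (fun p : ℝ × ℝ => pdx f p.1 p.2) = fun p : ℝ × ℝ =>
      fderiv ℝ (fun q : ℝ × ℝ => f q.1 q.2) p ((1 : ℝ), (0 : ℝ)) := funext heq
  rw [this]; exact hF

lemma contDiff_pdy {f : ℝ → ℝ → ℝ}
    (hf : ContDiff ℝ (⊤ : ℕ∞) (fun p : ℝ × ℝ => f p.1 p.2)) :
    ContDiff ℝ (⊤ : ℕ∞) (fun p : ℝ × ℝ => pdy f p.1 p.2) := by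
  have hF : ContDiff ℝ (⊤ : ℕ∞) (fun p : ℝ × ℝ =>
      fderiv ℝ (fun q : ℝ × ℝ => f q.1 q.2) p ((0 : ℝ), (1 : ℝ))) :=
    (hf.fderiv_right (by simp)).clm_apply contDiff_const
  have heq : ∀ p : ℝ × ℝ, pdy f p.1 p.2 =
      fderiv ℝ (fun q : ℝ × ℝ => f q.1 q.2) p ((0 : ℝ), (1 : ℝ)) := by
    rintro ⟨x, y⟩
    have hline : HasDerivAt (fun t : ℝ => ((x, t) : ℝ × ℝ)) ((0 : ℝ), (1 : ℝ)) y :=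
      HasDerivAt.prodMk (hasDerivAt_const y x) (hasDerivAt_id y)
    have hc : HasDerivAt (fun t : ℝ => f x t)
        (fderiv ℝ (fun q : ℝ × ℝ => f q.1 q.2) (x, y) ((0 : ℝ), (1 : ℝ))) y :=
      ((hf.differentiable (by simp) (x, y)).hasFDerivAt.comp_hasDerivAt y hline)
    show deriv (fun t => f x t) y = _
    exact hc.deriv
  have : (fun p : ℝ × ℝ => pdy f p.1 p.2) = fun p : ℝ × ℝ =>
      fderiv ℝ (fun q : ℝ × ℝ => f q.1 q.2) p ((0 : ℝ), (1 : ℝ)) := funext heq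
  rw [this]; exact hF

/-- Two smooth solutions of the momentum system
−4uₓₓₓ − uₓ,yy = 3 u_y,yx and −3 uₓ,xy = u_y,xx + 4 u_y,yy
on an open rectangle differ by c₁(x²−4y²)+c₂x+c₃y+c₄. -/
theorem stmt12 (a b c d : ℝ) (Ω : Set (ℝ × ℝ)) (hΩ : Ω = Set.Ioo a b ×ˢ Set.Ioo c d)
    (uy ux1 ux2 : ℝ → ℝ → ℝ)
    (huy : ContDiff ℝ (⊤ : ℕ∞) (fun p : ℝ × ℝ => uy p.1 p.2))
    (hux1 : ContDiff ℝ (⊤ : ℕ∞) (fun p : ℝ × ℝ => ux1 p.1 p.2))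
    (hux2 : ContDiff ℝ (⊤ : ℕ∞) (fun p : ℝ × ℝ => ux2 p.1 p.2))
    (heq1 : ∀ x y, (x, y) ∈ Ω →
      (-4) * pdx (pdx ux1) x y - pdy (pdy ux1) x y = 3 * pdx (pdy uy) x y ∧
      (-4) * pdx (pdx ux2) x y - pdy (pdy ux2) x y = 3 * pdx (pdy uy) x y)
    (heq2 : ∀ x y, (x, y) ∈ Ω →
      (-3) * pdy (pdx ux1) x y = pdx (pdx uy) x y + 4 * pdy (pdy uy) x y ∧
      (-3) * pdy (pdx ux2) x y = pdx (pdx uy) x y + 4 * pdy (pdy uy) x y) :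
    ∃ c₁ c₂ c₃ c₄ : ℝ, ∀ x y, (x, y) ∈ Ω →
      ux1 x y - ux2 x y = c₁ * (x ^ 2 - 4 * y ^ 2) + c₂ * x + c₃ * y + c₄ := by
  by_cases hab : a < b
  · by_cases hcd : c < d
    · subst hΩ
      set w : ℝ → ℝ → ℝ := fun x y => ux1 x y - ux2 x y with hwdef
      have hW : ContDiff ℝ (⊤ : ℕ∞) (fun p : ℝ × ℝ => w p.1 p.2) := hux1.sub hux2
      have hWx := contDiff_pdx hW
      have hWy := contDiff_pdy hW
      -- first partials subtract
      have hpx : ∀ x y, pdx w x y = pdx ux1 x y - pdx ux2 x y := by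
        intro x y
        show deriv (fun t => ux1 t y - ux2 t y) x = _
        exact deriv_sub (hasDerivAt_pdx hux1 x y).differentiableAt
          (hasDerivAt_pdx hux2 x y).differentiableAt
      have hpy : ∀ x y, pdy w x y = pdy ux1 x y - pdy ux2 x y := by
        intro x y
        show deriv (fun t => ux1 x t - ux2 x t) y = _
        exact deriv_sub (hasDerivAt_pdy hux1 x y).differentiableAt
          (hasDerivAt_pdy hux2 x y).differentiableAt
      -- second partials subtract
      have hBall : ∀ x y, pdy (pdx w) x y = pdy (pdx ux1) x y - pdy (pdx ux2) x y := by
        intro x y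
        have hfe : (fun t => pdx w x t) = fun t => pdx ux1 x t - pdx ux2 x t :=
          funext fun t => hpx x t
        show deriv (fun t => pdx w x t) y = _
        rw [hfe]
        exact deriv_sub (hasDerivAt_pdy (contDiff_pdx hux1) x y).differentiableAt
          (hasDerivAt_pdy (contDiff_pdx hux2) x y).differentiableAt
      have hXX : ∀ x y, pdx (pdx w) x y = pdx (pdx ux1) x y - pdx (pdx ux2) x y := by
        intro x y
        have hfe : (fun t => pdx w t y) = fun t => pdx ux1 t y - pdx ux2 t y :=
          funext fun t => hpx t y
        show deriv (fun t => pdx w t y) x = _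
        rw [hfe]
        exact deriv_sub (hasDerivAt_pdx (contDiff_pdx hux1) x y).differentiableAt
          (hasDerivAt_pdx (contDiff_pdx hux2) x y).differentiableAt
      have hYY : ∀ x y, pdy (pdy w) x y = pdy (pdy ux1) x y - pdy (pdy ux2) x y := by
        intro x y
        have hfe : (fun t => pdy w x t) = fun t => pdy ux1 x t - pdy ux2 x t :=
          funext fun t => hpy x t
        show deriv (fun t => pdy w x t) y = _
        rw [hfe]
        exact deriv_sub (hasDerivAt_pdy (contDiff_pdy hux1) x y).differentiableAt
          (hasDerivAt_pdy (contDiff_pdy hux2) x y).differentiableAt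
      -- PDE facts for w on Ω
      have memΩ : ∀ {x y : ℝ}, x ∈ Set.Ioo a b → y ∈ Set.Ioo c d →
          (x, y) ∈ Set.Ioo a b ×ˢ Set.Ioo c d := fun hx hy => Set.mem_prod.2 ⟨hx, hy⟩
      have hB : ∀ x ∈ Set.Ioo a b, ∀ y ∈ Set.Ioo c d, pdy (pdx w) x y = 0 := by
        intro x hx y hy
        obtain ⟨e1, e2⟩ := heq2 x y (memΩ hx hy)
        rw [hBall]; linarith
      have hC : ∀ x ∈ Set.Ioo a b, ∀ y ∈ Set.Ioo c d,
          4 * pdx (pdx w) x y + pdy (pdy w) x y = 0 := by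
        intro x hx y hy
        obtain ⟨e1, e2⟩ := heq1 x y (memΩ hx hy)
        rw [hXX, hYY]; linarith
      -- base point
      set x₀ : ℝ := (a + b) / 2 with hx₀def
      set y₀ : ℝ := (c + d) / 2 with hy₀def
      have hx₀ : x₀ ∈ Set.Ioo a b := ⟨by rw [hx₀def]; linarith, by rw [hx₀def]; linarith⟩
      have hy₀ : y₀ ∈ Set.Ioo c d := ⟨by rw [hy₀def]; linarith, by rw [hy₀def]; linarith⟩
      -- Step 1: ∂ₓw depends only on x
      have h1 : ∀ x ∈ Set.Ioo a b, ∀ y ∈ Set.Ioo c d, pdx w x y = pdx w x y₀ := by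
        intro x hx y hy
        refine constIoo (fun t ht => ?_) y hy y₀ hy₀
        have hd := hasDerivAt_pdy hWx x t
        rwa [hB x hx t ht] at hd
      -- Step 2: additive separation
      have h2 : ∀ x ∈ Set.Ioo a b, ∀ y ∈ Set.Ioo c d,
          w x y = w x y₀ + w x₀ y - w x₀ y₀ := by
        intro x hx y hy
        have key : ∀ t ∈ Set.Ioo a b, HasDerivAt (fun s => w s y - w s y₀) 0 t := by
          intro t ht
          have hd := (hasDerivAt_pdx hW t y).sub (hasDerivAt_pdx hW t y₀)
          have h0 : pdx w t y - pdx w t y₀ = 0 := by rw [h1 t ht y hy]; ring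
          rwa [h0] at hd
        have := constIoo key x hx x₀ hx₀
        linarith
      -- second derivative separation
      have h3a : ∀ x ∈ Set.Ioo a b, ∀ y ∈ Set.Ioo c d,
          pdx (pdx w) x y = pdx (pdx w) x y₀ := by
        intro x hx y hy
        have hev : (fun t => pdx w t y) =ᶠ[nhds x] fun t => pdx w t y₀ :=
          Filter.eventuallyEq_of_mem (isOpen_Ioo.mem_nhds hx) fun t ht => h1 t ht y hy
        exact hev.deriv_eq
      have h2' : ∀ x ∈ Set.Ioo a b, ∀ y ∈ Set.Ioo c d, pdy w x y = pdy w x₀ y := by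
        intro x hx y hy
        have hev : (fun t => w x t) =ᶠ[nhds y] fun t => w x y₀ + w x₀ t - w x₀ y₀ :=
          Filter.eventuallyEq_of_mem (isOpen_Ioo.mem_nhds hy) fun t ht => h2 x hx t ht
        have heq : pdy w x y = deriv (fun t => w x y₀ + w x₀ t - w x₀ y₀) y := hev.deriv_eq
        rw [heq]
        have hd : HasDerivAt (fun t => w x y₀ + w x₀ t - w x₀ y₀)
            (0 + pdy w x₀ y - 0) y :=
          ((hasDerivAt_const y (w x y₀)).add (hasDerivAt_pdy hW x₀ y)).sub
            (hasDerivAt_const y (w x₀ y₀))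
        rw [hd.deriv]; ring
      have h3b : ∀ x ∈ Set.Ioo a b, ∀ y ∈ Set.Ioo c d,
          pdy (pdy w) x y = pdy (pdy w) x₀ y := by
        intro x hx y hy
        have hev : (fun t => pdy w x t) =ᶠ[nhds y] fun t => pdy w x₀ t :=
          Filter.eventuallyEq_of_mem (isOpen_Ioo.mem_nhds hy) fun t ht => h2' x hx t ht
        exact hev.deriv_eq
      -- the constant k
      set k : ℝ := pdx (pdx w) x₀ y₀ with hkdef
      have hF2 : ∀ x ∈ Set.Ioo a b, pdx (pdx w) x y₀ = k := by
        intro x hx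
        have e1 := hC x hx y₀ hy₀
        have e2 := hC x₀ hx₀ y₀ hy₀
        rw [h3b x hx y₀ hy₀] at e1
        linarith
      have hG2 : ∀ y ∈ Set.Ioo c d, pdy (pdy w) x₀ y = -4 * k := by
        intro y hy
        have e1 := hC x₀ hx₀ y hy
        rw [h3a x₀ hx₀ y hy] at e1
        linarith
      -- integrate in x twice
      set m : ℝ := pdx w x₀ y₀ - k * x₀ with hmdef
      have hphi : ∀ x ∈ Set.Ioo a b, pdx w x y₀ = k * x + m := by
        intro x hx
        have key : ∀ t ∈ Set.Ioo a b,
            HasDerivAt (fun s => pdx w s y₀ - (k * s + m)) 0 t := by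
          intro t ht
          have hd := (hasDerivAt_pdx hWx t y₀).sub
            ((hasDerivAt_id' (𝕜 := ℝ) (x := t)).const_mul k |>.add_const m)
          have h0 : pdx (pdx w) t y₀ - k * 1 = 0 := by rw [hF2 t ht]; ring
          rwa [h0] at hd
        have := constIoo key x hx x₀ hx₀
        have hbase : pdx w x₀ y₀ - (k * x₀ + m) = 0 := by rw [hmdef]; ring
        linarith
      set n : ℝ := w x₀ y₀ - (k * x₀ ^ 2 / 2 + m * x₀) with hndef
      have hf : ∀ x ∈ Set.Ioo a b, w x y₀ = k * x ^ 2 / 2 + m * x + n := by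
        intro x hx
        have key : ∀ t ∈ Set.Ioo a b,
            HasDerivAt (fun s => w s y₀ - (k * s ^ 2 / 2 + m * s)) 0 t := by
          intro t ht
          have hpoly : HasDerivAt (fun s : ℝ => k * s ^ 2 / 2 + m * s) (k * t + m) t := by
            have h1 : HasDerivAt (fun s : ℝ => k * s ^ 2 / 2 + m * s)
                (k * ((2 : ℕ) * t ^ (2 - 1)) / 2 + m * 1) t :=
              (((hasDerivAt_pow 2 t).const_mul k).div_const 2).add
                ((hasDerivAt_id' (𝕜 := ℝ) (x := t)).const_mul m)
            convert h1 using 1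
            push_cast; ring
          have hd := (hasDerivAt_pdx hW t y₀).sub hpoly
          have h0 : pdx w t y₀ - (k * t + m) = 0 := by rw [hphi t ht]; ring
          rwa [h0] at hd
        have := constIoo key x hx x₀ hx₀
        have hbase : w x₀ y₀ - (k * x₀ ^ 2 / 2 + m * x₀) = n := by rw [hndef]
        linarith
      -- integrate in y twice
      set p : ℝ := pdy w x₀ y₀ + 4 * k * y₀ with hpdef
      have hpsi : ∀ y ∈ Set.Ioo c d, pdy w x₀ y = -4 * k * y + p := by
        intro y hy
        have key : ∀ t ∈ Set.Ioo c d,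
            HasDerivAt (fun s => pdy w x₀ s - (-4 * k * s + p)) 0 t := by
          intro t ht
          have hd := (hasDerivAt_pdy hWy x₀ t).sub
            ((hasDerivAt_id' (𝕜 := ℝ) (x := t)).const_mul (-4 * k) |>.add_const p)
          have h0 : pdy (pdy w) x₀ t - (-4 * k) * 1 = 0 := by rw [hG2 t ht]; ring
          rwa [h0] at hd
        have := constIoo key y hy y₀ hy₀
        have hbase : pdy w x₀ y₀ - (-4 * k * y₀ + p) = 0 := by rw [hpdef]; ring
        linarith
      set q : ℝ := w x₀ y₀ - (-2 * k * y₀ ^ 2 + p * y₀) with hqdef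
      have hg : ∀ y ∈ Set.Ioo c d, w x₀ y = -2 * k * y ^ 2 + p * y + q := by
        intro y hy
        have key : ∀ t ∈ Set.Ioo c d,
            HasDerivAt (fun s => w x₀ s - (-2 * k * s ^ 2 + p * s)) 0 t := by
          intro t ht
          have hpoly : HasDerivAt (fun s : ℝ => -2 * k * s ^ 2 + p * s)
              (-4 * k * t + p) t := by
            have h1 : HasDerivAt (fun s : ℝ => -2 * k * s ^ 2 + p * s)
                (-2 * k * ((2 : ℕ) * t ^ (2 - 1)) + p * 1) t :=
              ((hasDerivAt_pow 2 t).const_mul (-2 * k)).add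
                ((hasDerivAt_id' (𝕜 := ℝ) (x := t)).const_mul p)
            convert h1 using 1
            push_cast; ring
          have hd := (hasDerivAt_pdy hW x₀ t).sub hpoly
          have h0 : pdy w x₀ t - (-4 * k * t + p) = 0 := by rw [hpsi t ht]; ring
          rwa [h0] at hd
        have := constIoo key y hy y₀ hy₀
        have hbase : w x₀ y₀ - (-2 * k * y₀ ^ 2 + p * y₀) = q := by rw [hqdef]
        linarith
      -- conclude
      refine ⟨k / 2, m, p, n + q - w x₀ y₀, fun x y hxy => ?_⟩
      obtain ⟨hx, hy⟩ := Set.mem_prod.1 hxy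
      have hww : ux1 x y - ux2 x y = w x y := rfl
      rw [hww, h2 x hx y hy, hf x hx, hg y hy]
      ring
    · exact ⟨0, 0, 0, 0, fun x y hxy => by
        rw [hΩ] at hxy
        exact absurd (hxy.2.1.trans hxy.2.2) hcd⟩
  · exact ⟨0, 0, 0, 0, fun x y hxy => by
      rw [hΩ] at hxy
      exact absurd (hxy.1.1.trans hxy.1.2) hab⟩
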